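/- If G = G_1 × G_2 × ... × G_m is a direct product of finite groups, then the chain difference of G is at least the sum of the chain differences of the factors: cd(G) ≥ Σ_i cd(G_i). -/

import Mathlib

/-- An unrefinable chain of length `t` for a group `G`: an ascending chain of
subgroups from `⊥` to `⊤` in which each term is maximal in the next
(equivalently, `G = G₀ > G₁ > ⋯ > G_t = 1` with each `Gᵢ` maximal in `Gᵢ₋₁`). -/
def IsUnrefinableChain {G : Type*} [Group G] {t : ℕ} (s : Fin (t + 1) → Subgroup G) : Prop :=
  s 0 = ⊥ ∧ s (Fin.last t) = ⊤ ∧ ∀ i : Fin t, s i.castSucc ⋖ s i.succ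

/-- The length `l(G)`: the maximal length of an unrefinable chain. -/
noncomputable def groupLength (G : Type*) [Group G] : ℕ :=
  sSup {t | ∃ s : Fin (t + 1) → Subgroup G, IsUnrefinableChain s}

/-- The depth `λ(G)`: the minimal length of an unrefinable chain. -/
noncomputable def groupDepth (G : Type*) [Group G] : ℕ :=
  sInf {t | ∃ s : Fin (t + 1) → Subgroup G, IsUnrefinableChain s}

/-- The chain difference `cd(G) = l(G) - λ(G)`. -/
noncomputable def chainDiff (G : Type*) [Group G] : ℕ := groupLength G - groupDepth G

/-- A chief series of length `t` for `G`. -/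
def IsChiefSeries {G : Type*} [Group G] {t : ℕ} (s : Fin (t + 1) → Subgroup G) : Prop :=
  s 0 = ⊥ ∧ s (Fin.last t) = ⊤ ∧ (∀ i, (s i).Normal) ∧
    ∀ i : Fin t, s i.castSucc < s i.succ ∧
      ∀ N : Subgroup G, N.Normal → s i.castSucc < N → N < s i.succ → False

/-- The chief length of `G`: the number of factors in a chief series. -/
noncomputable def chiefLength (G : Type*) [Group G] : ℕ :=
  sSup {t | ∃ s : Fin (t + 1) → Subgroup G, IsChiefSeries s}

/-!
For a subgroup `K ≤ G` that is the kernel of a surjection `G ↠ Q`, an unrefinable chain of `K`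
(pushed into `G`) followed by one of `Q` (pulled back to `G`) is an unrefinable chain of `G` whose
length is the sum of the two. Applied to `G ≤ G × H ↠ H`, this gives `l(G × H) ≥ l(G) + l(H)` and
`λ(G × H) ≤ λ(G) + λ(H)`, hence `cd(G × H) ≥ cd(G) + cd(H)`; the statement for finitely many
factors follows by induction, splitting off the first factor.
-/

open Function

abbrev CovBySeries (α : Type*) [Preorder α] := RelSeries {(a, b) : α × α | a ⋖ b}

def unrefinableChainLengths (G : Type*) [Group G] : Set ℕ :=
  {t | ∃ s : Fin (t + 1) → Subgroup G, IsUnrefinableChain s}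

namespace Subgroup

variable {G H : Type*} [Group G] [Group H]

theorem map_covBy_map {f : G →* H} (hf : Injective f) {A B : Subgroup G} (h : A ⋖ B) :
    A.map f ⋖ B.map f := by
  have hrange : Set.range (map f) = Set.Iic f.range := by
    ext K
    exact ⟨by rintro ⟨A, rfl⟩; exact map_le_range f A, fun hK => ⟨_, map_comap_eq_self hK⟩⟩
  exact h.image (OrderEmbedding.ofMapLEIff (map f) fun _ _ => map_le_map_iff_of_injective hf)
    (hrange ▸ Set.ordConnected_Iic)

theorem comap_covBy_comap {f : G →* H} (hf : Surjective f) {A B : Subgroup H} (h : A ⋖ B) :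
    A.comap f ⋖ B.comap f := by
  have hrange : Set.range (comap f) = Set.Ici f.ker := by
    ext K
    exact ⟨by rintro ⟨A, rfl⟩; exact ker_le_comap f A, fun hK => ⟨_, comap_map_eq_self hK⟩⟩
  exact h.image (OrderEmbedding.ofMapLEIff (comap f) fun _ _ => comap_le_comap_of_surjective hf)
    (hrange ▸ Set.ordConnected_Ici)

end Subgroup

section ChainLengths

variable {G H K Q : Type*} [Group G] [Group H] [Group K] [Group Q]

theorem mem_unrefinableChainLengths_iff {t : ℕ} :
    t ∈ unrefinableChainLengths G ↔
      ∃ p : CovBySeries (Subgroup G), p.length = t ∧ p.head = ⊥ ∧ p.last = ⊤ := by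
  constructor
  · rintro ⟨s, h0, hlast, hstep⟩
    exact ⟨⟨t, s, hstep⟩, rfl, h0, hlast⟩
  · rintro ⟨⟨t, s, hstep⟩, rfl, h0, hlast⟩
    exact ⟨s, h0, hlast, hstep⟩

theorem unrefinableChainLengths_subset_of_mulEquiv (e : G ≃* H) :
    unrefinableChainLengths G ⊆ unrefinableChainLengths H := by
  intro t ht
  obtain ⟨p, rfl, h0, hlast⟩ := mem_unrefinableChainLengths_iff.1 ht
  let p' : CovBySeries (Subgroup H) := p.map ⟨e.mapSubgroup, (apply_covBy_apply_iff _).2⟩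
  exact mem_unrefinableChainLengths_iff.2 ⟨p', rfl, by simp [p', h0], by simp [p', hlast]⟩

theorem unrefinableChainLengths_congr (e : G ≃* H) :
    unrefinableChainLengths G = unrefinableChainLengths H :=
  (unrefinableChainLengths_subset_of_mulEquiv e).antisymm
    (unrefinableChainLengths_subset_of_mulEquiv e.symm)

theorem chainDiff_congr (e : G ≃* H) : chainDiff G = chainDiff H :=
  congrArg (fun S : Set ℕ => sSup S - sInf S) (unrefinableChainLengths_congr e)

theorem groupDepth_le {t : ℕ} (ht : t ∈ unrefinableChainLengths G) : groupDepth G ≤ t :=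
  Nat.sInf_le ht

theorem add_mem_unrefinableChainLengths_of_range_eq_ker {i : K →* G} {f : G →* Q}
    (hi : Injective i) (hf : Surjective f) (hexact : i.range = f.ker) {a b : ℕ}
    (ha : a ∈ unrefinableChainLengths K) (hb : b ∈ unrefinableChainLengths Q) :
    a + b ∈ unrefinableChainLengths G := by
  obtain ⟨p, rfl, hp0, hp1⟩ := mem_unrefinableChainLengths_iff.1 ha
  obtain ⟨q, rfl, hq0, hq1⟩ := mem_unrefinableChainLengths_iff.1 hb
  let p' : CovBySeries (Subgroup G) := p.map ⟨Subgroup.map i, Subgroup.map_covBy_map hi⟩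
  let q' : CovBySeries (Subgroup G) := q.map ⟨Subgroup.comap f, Subgroup.comap_covBy_comap hf⟩
  have hglue : p'.last = q'.head := by
    simp [p', q', hp1, hq0, ← MonoidHom.range_eq_map, hexact]
  exact mem_unrefinableChainLengths_iff.2
    ⟨p'.smash q' hglue, rfl, by simp [p', hp0], by simp [q', hq1]⟩

theorem add_mem_unrefinableChainLengths_prod {a b : ℕ} (ha : a ∈ unrefinableChainLengths G)
    (hb : b ∈ unrefinableChainLengths H) : a + b ∈ unrefinableChainLengths (G × H) :=
  add_mem_unrefinableChainLengths_of_range_eq_ker (i := MonoidHom.inl G H) (f := MonoidHom.snd G H)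
    (Prod.mk_left_injective 1) Prod.snd_surjective
    (by rw [MonoidHom.ker_snd]; ext ⟨g, h⟩; simp [MonoidHom.mem_range, Subgroup.mem_prod, eq_comm])
    ha hb

end ChainLengths

section Finite

variable {G H : Type*} [Group G] [Group H] [Finite G] [Finite H]

theorem unrefinableChainLengths_nonempty : (unrefinableChainLengths G).Nonempty := by
  obtain ⟨p, -, -, hp0, hp1⟩ :=
    LTSeries.exists_relSeries_covBy_and_head_eq_bot_and_last_eq_bot
      (RelSeries.singleton _ (⊥ : Subgroup G))
  exact ⟨p.length, mem_unrefinableChainLengths_iff.2 ⟨p, rfl, hp0, hp1⟩⟩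

theorem bddAbove_unrefinableChainLengths : BddAbove (unrefinableChainLengths G) := by
  have := Fintype.ofFinite (Subgroup G)
  refine ⟨Fintype.card (Subgroup G), fun t ht => ?_⟩
  obtain ⟨p, rfl, -, -⟩ := mem_unrefinableChainLengths_iff.1 ht
  exact (LTSeries.length_lt_card (p.ofLE fun _ h => CovBy.lt h)).le

theorem groupLength_mem_unrefinableChainLengths : groupLength G ∈ unrefinableChainLengths G :=
  Nat.sSup_mem unrefinableChainLengths_nonempty bddAbove_unrefinableChainLengths

theorem groupDepth_mem_unrefinableChainLengths : groupDepth G ∈ unrefinableChainLengths G :=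
  Nat.sInf_mem unrefinableChainLengths_nonempty

theorem le_groupLength {t : ℕ} (ht : t ∈ unrefinableChainLengths G) : t ≤ groupLength G :=
  le_csSup bddAbove_unrefinableChainLengths ht

theorem groupDepth_le_groupLength : groupDepth G ≤ groupLength G :=
  groupDepth_le groupLength_mem_unrefinableChainLengths

theorem chainDiff_add_chainDiff_le_chainDiff_prod :
    chainDiff G + chainDiff H ≤ chainDiff (G × H) := by
  have hlength : groupLength G + groupLength H ≤ groupLength (G × H) :=
    le_groupLength (add_mem_unrefinableChainLengths_prod
      groupLength_mem_unrefinableChainLengths groupLength_mem_unrefinableChainLengths)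
  have hdepth : groupDepth (G × H) ≤ groupDepth G + groupDepth H :=
    groupDepth_le (add_mem_unrefinableChainLengths_prod
      groupDepth_mem_unrefinableChainLengths groupDepth_mem_unrefinableChainLengths)
  have hG := groupDepth_le_groupLength (G := G)
  have hH := groupDepth_le_groupLength (G := H)
  unfold chainDiff
  omega

end Finite

def MulEquiv.piFinSucc {m : ℕ} (G : Fin (m + 1) → Type*) [∀ i, Group (G i)] :
    (∀ i, G i) ≃* G 0 × ∀ i : Fin m, G i.succ :=
  { (Fin.consEquiv G).symm with map_mul' := fun _ _ => rfl }

/-- `cd(G₁ × ⋯ × G_m) ≥ Σᵢ cd(Gᵢ)`. -/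
theorem chainDiff_pi_ge_sum (m : ℕ) (G : Fin m → Type*)
    [∀ i, Group (G i)] [∀ i, Finite (G i)] :
    ∑ i : Fin m, chainDiff (G i) ≤ chainDiff (∀ i, G i) := by
  induction m with
  | zero => simp
  | succ m ih =>
    calc ∑ i, chainDiff (G i)
        = chainDiff (G 0) + ∑ i : Fin m, chainDiff (G i.succ) := Fin.sum_univ_succ _
      _ ≤ chainDiff (G 0) + chainDiff (∀ i : Fin m, G i.succ) := by gcongr; exact ih _
      _ ≤ chainDiff (G 0 × ∀ i : Fin m, G i.succ) := chainDiff_add_chainDiff_le_chainDiff_prod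
      _ = chainDiff (∀ i, G i) := (chainDiff_congr (MulEquiv.piFinSucc G)).symm
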